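/- Let (D_cf, C_cf) be any cut-free cycle-normal CLKID^ω_a proof of the sequent Add2(x,y,z) ⊢ Add1(x,y,z). The rightmost path starting from any node labeled by an index sequent in the tree-unfolding of (D_cf, C_cf) is infinite. -/

import Mathlib

namespace CLKID

/-- Terms of the language: variables, the constant `0`, and the unary function `s`. -/
inductive Tm : Type where
  | var : ℕ → Tm
  | zero : Tm
  | s : Tm → Tm
deriving DecidableEq

/-- `sIter n t` is the term `s^n t`. -/
def sIter : ℕ → Tm → Tm
  | 0, t => t
  | n + 1, t => Tm.s (sIter n t)

/-- Substitution on terms. -/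
def Tm.subst (θ : ℕ → Tm) : Tm → Tm
  | .var x => θ x
  | .zero => .zero
  | .s t => .s (t.subst θ)

/-- Free variables of a term. -/
def Tm.fv : Tm → Set ℕ
  | .var x => {x}
  | .zero => ∅
  | .s t => t.fv

/-- Subterms of a term. -/
def Tm.sub : Tm → Set Tm
  | .var x => {Tm.var x}
  | .zero => {Tm.zero}
  | .s t => insert (Tm.s t) t.sub

/-- The variable of a term (`none` if the term is of the form `s^n 0`). -/
def Tm.varOf : Tm → Option ℕ
  | .var x => some x
  | .zero => none
  | .s t => t.varOf

/-- Formulas: equations, the two inductive-predicate atoms `Add1`/`Add2`,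
    and the usual first-order connectives and quantifiers. -/
inductive Fm : Type where
  | eq : Tm → Tm → Fm
  | add1 : Tm → Tm → Tm → Fm
  | add2 : Tm → Tm → Tm → Fm
  | not : Fm → Fm
  | and : Fm → Fm → Fm
  | or : Fm → Fm → Fm
  | imp : Fm → Fm → Fm
  | all : ℕ → Fm → Fm
  | ex : ℕ → Fm → Fm
deriving DecidableEq

/-- Substitution on formulas. -/
def Fm.subst (θ : ℕ → Tm) : Fm → Fm
  | .eq t u => .eq (t.subst θ) (u.subst θ)
  | .add1 a b c => .add1 (a.subst θ) (b.subst θ) (c.subst θ)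
  | .add2 a b c => .add2 (a.subst θ) (b.subst θ) (c.subst θ)
  | .not φ => .not (φ.subst θ)
  | .and φ ψ => .and (φ.subst θ) (ψ.subst θ)
  | .or φ ψ => .or (φ.subst θ) (ψ.subst θ)
  | .imp φ ψ => .imp (φ.subst θ) (ψ.subst θ)
  | .all x φ => .all x (φ.subst (Function.update θ x (Tm.var x)))
  | .ex x φ => .ex x (φ.subst (Function.update θ x (Tm.var x)))

/-- Free variables of a formula. -/
def Fm.fv : Fm → Set ℕ
  | .eq t u => t.fv ∪ u.fv
  | .add1 a b c => a.fv ∪ b.fv ∪ c.fv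
  | .add2 a b c => a.fv ∪ b.fv ∪ c.fv
  | .not φ => φ.fv
  | .and φ ψ => φ.fv ∪ ψ.fv
  | .or φ ψ => φ.fv ∪ ψ.fv
  | .imp φ ψ => φ.fv ∪ ψ.fv
  | .all x φ => φ.fv \ {x}
  | .ex x φ => φ.fv \ {x}

/-- Terms occurring in a formula. -/
def Fm.tms : Fm → Set Tm
  | .eq t u => t.sub ∪ u.sub
  | .add1 a b c => a.sub ∪ b.sub ∪ c.sub
  | .add2 a b c => a.sub ∪ b.sub ∪ c.sub
  | .not φ => φ.tms
  | .and φ ψ => φ.tms ∪ ψ.tms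
  | .or φ ψ => φ.tms ∪ ψ.tms
  | .imp φ ψ => φ.tms ∪ ψ.tms
  | .all _ φ => φ.tms
  | .ex _ φ => φ.tms

/-- The substitution `[x := t]`. -/
def sub1 (x : ℕ) (t : Tm) : ℕ → Tm := fun y => if y = x then t else Tm.var y

/-- The simultaneous substitution `[v1 := t, v2 := u]`. -/
def sub2 (v1 v2 : ℕ) (t u : Tm) : ℕ → Tm :=
  fun z => if z = v1 then t else if z = v2 then u else Tm.var z

/-- `≡_Γ`: the smallest congruence relation on terms containing all pairs `(t, u)`
    with the equation `t = u` in `Γ`. -/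
inductive EqvTm (Γ : Set Fm) : Tm → Tm → Prop where
  | base {t u : Tm} : Fm.eq t u ∈ Γ → EqvTm Γ t u
  | refl (t : Tm) : EqvTm Γ t t
  | symm {t u : Tm} : EqvTm Γ t u → EqvTm Γ u t
  | trans {t u v : Tm} : EqvTm Γ t u → EqvTm Γ u v → EqvTm Γ t v
  | sCongr {t u : Tm} : EqvTm Γ t u → EqvTm Γ (Tm.s t) (Tm.s u)

/-- `t ~_Γ u` : `s^n t ≡_Γ s^m u` for some naturals `n`, `m`. -/
def DepTm (Γ : Set Fm) (t u : Tm) : Prop := ∃ n m : ℕ, EqvTm Γ (sIter n t) (sIter m u)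

/-- A sequent: a pair of finite sets of formulas. -/
structure Seq where
  ant : Finset Fm
  suc : Finset Fm

/-- The antecedent of a sequent, as a set of formulas. -/
def antSet (S : Seq) : Set Fm := ↑S.ant

/-- `[Γ]` from Lemma on chains: `{ s^n t1 = s^n t2 | t1 = t2 ∈ Γ or t2 = t1 ∈ Γ }`. -/
def brkt (Γ : Set Fm) : Set Fm :=
  {φ | ∃ (n : ℕ) (t1 t2 : Tm), φ = Fm.eq (sIter n t1) (sIter n t2) ∧
        (Fm.eq t1 t2 ∈ Γ ∨ Fm.eq t2 t1 ∈ Γ)}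

/-- `B1(Γ ⊢ Δ)` : second arguments of `Add1` atoms in the consequent. -/
def B1 (S : Seq) : Set Tm := {b | ∃ a c, Fm.add1 a b c ∈ S.suc}

/-- `C(Γ ⊢ Δ)` : third arguments of `Add2` atoms in the antecedent
    or `Add1` atoms in the consequent. -/
def Cset (S : Seq) : Set Tm :=
  {c | (∃ a b, Fm.add2 a b c ∈ S.ant) ∨ (∃ a b, Fm.add1 a b c ∈ S.suc)}

/-- Index sequent. -/
def IndexSequent (S : Seq) : Prop :=
  (∀ t ∈ B1 S, ∀ u ∈ Cset S, ¬ DepTm (antSet S) t u) ∧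
  (∀ b ∈ B1 S, ∀ b' ∈ B1 S, ∀ n m : ℕ, EqvTm (antSet S) (sIter n b) (sIter m b') → n = m)

/-! ## The cyclic proof systems `CLKID^ω` and `CLKID^ω_a` -/

/-- Rule labels; each label carries the instance data needed to describe the
    rule application (principal formulas, substitutions, case variables, ...).
    `bud` labels bud leaves of cyclic derivation trees. -/
inductive Rule : Type where
  | ax
  | weak
  | cut (φ : Fm)
  | subst (θ : ℕ → Tm)
  | negL (φ : Fm)
  | negR (φ : Fm)
  | andL (φ ψ : Fm)
  | andR (φ ψ : Fm)
  | orL (φ ψ : Fm)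
  | orR (φ ψ : Fm)
  | impL (φ ψ : Fm)
  | impR (φ ψ : Fm)
  | allL (x : ℕ) (t : Tm) (φ : Fm)
  | allR (x : ℕ) (φ : Fm)
  | exL (x : ℕ) (φ : Fm)
  | exR (x : ℕ) (t : Tm) (φ : Fm)
  | eqR (t : Tm)
  | eqL (v1 v2 : ℕ) (t u : Tm)
  | eqLa (v1 v2 : ℕ) (t u : Tm)
  | add1R1
  | add1R2 (a b c : Tm)
  | add2R1
  | add2R2 (a b c : Tm)
  | caseAdd1 (a b c : Tm) (x y z : ℕ)
  | caseAdd2 (a b c : Tm) (x y z : ℕ)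
  | bud

/-- `Inf r S L` : the sequent `S` follows from the list of premises `L`
    by the rule (instance) `r`. -/
inductive Inf : Rule → Seq → List Seq → Prop where
  | ax {Γ Δ : Finset Fm} :
      (Γ ∩ Δ).Nonempty → Inf .ax ⟨Γ, Δ⟩ []
  | weak {Γ Δ Γ' Δ' : Finset Fm} :
      Γ' ⊆ Γ → Δ' ⊆ Δ → Inf .weak ⟨Γ, Δ⟩ [⟨Γ', Δ'⟩]
  | cut {Γ Δ : Finset Fm} {φ : Fm} :
      Inf (.cut φ) ⟨Γ, Δ⟩ [⟨Γ, insert φ Δ⟩, ⟨insert φ Γ, Δ⟩]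
  | subst {Γ Δ : Finset Fm} {θ : ℕ → Tm} :
      Inf (.subst θ) ⟨Γ.image (Fm.subst θ), Δ.image (Fm.subst θ)⟩ [⟨Γ, Δ⟩]
  | negL {Γ Δ : Finset Fm} {φ : Fm} :
      Inf (.negL φ) ⟨insert (.not φ) Γ, Δ⟩ [⟨Γ, insert φ Δ⟩]
  | negR {Γ Δ : Finset Fm} {φ : Fm} :
      Inf (.negR φ) ⟨Γ, insert (.not φ) Δ⟩ [⟨insert φ Γ, Δ⟩]
  | andL {Γ Δ : Finset Fm} {φ ψ : Fm} :
      Inf (.andL φ ψ) ⟨insert (.and φ ψ) Γ, Δ⟩ [⟨insert φ (insert ψ Γ), Δ⟩]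
  | andR {Γ Δ : Finset Fm} {φ ψ : Fm} :
      Inf (.andR φ ψ) ⟨Γ, insert (.and φ ψ) Δ⟩ [⟨Γ, insert φ Δ⟩, ⟨Γ, insert ψ Δ⟩]
  | orL {Γ Δ : Finset Fm} {φ ψ : Fm} :
      Inf (.orL φ ψ) ⟨insert (.or φ ψ) Γ, Δ⟩ [⟨insert φ Γ, Δ⟩, ⟨insert ψ Γ, Δ⟩]
  | orR {Γ Δ : Finset Fm} {φ ψ : Fm} :
      Inf (.orR φ ψ) ⟨Γ, insert (.or φ ψ) Δ⟩ [⟨Γ, insert φ (insert ψ Δ)⟩]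
  | impL {Γ Δ : Finset Fm} {φ ψ : Fm} :
      Inf (.impL φ ψ) ⟨insert (.imp φ ψ) Γ, Δ⟩ [⟨Γ, insert φ Δ⟩, ⟨insert ψ Γ, Δ⟩]
  | impR {Γ Δ : Finset Fm} {φ ψ : Fm} :
      Inf (.impR φ ψ) ⟨Γ, insert (.imp φ ψ) Δ⟩ [⟨insert φ Γ, insert ψ Δ⟩]
  | allL {Γ Δ : Finset Fm} {x : ℕ} {t : Tm} {φ : Fm} :
      Inf (.allL x t φ) ⟨insert (.all x φ) Γ, Δ⟩ [⟨insert (φ.subst (sub1 x t)) Γ, Δ⟩]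
  | allR {Γ Δ : Finset Fm} {x : ℕ} {φ : Fm} :
      (∀ ψ ∈ Γ ∪ Δ, x ∉ Fm.fv ψ) →
      Inf (.allR x φ) ⟨Γ, insert (.all x φ) Δ⟩ [⟨Γ, insert φ Δ⟩]
  | exL {Γ Δ : Finset Fm} {x : ℕ} {φ : Fm} :
      (∀ ψ ∈ Γ ∪ Δ, x ∉ Fm.fv ψ) →
      Inf (.exL x φ) ⟨insert (.ex x φ) Γ, Δ⟩ [⟨insert φ Γ, Δ⟩]
  | exR {Γ Δ : Finset Fm} {x : ℕ} {t : Tm} {φ : Fm} :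
      Inf (.exR x t φ) ⟨Γ, insert (.ex x φ) Δ⟩ [⟨Γ, insert (φ.subst (sub1 x t)) Δ⟩]
  | eqR {Γ Δ : Finset Fm} {t : Tm} :
      Inf (.eqR t) ⟨Γ, insert (.eq t t) Δ⟩ []
  | eqL {Γ Δ : Finset Fm} {v1 v2 : ℕ} {t u : Tm} :
      Inf (.eqL v1 v2 t u)
        ⟨insert (.eq t u) (Γ.image (Fm.subst (sub2 v1 v2 t u))),
          Δ.image (Fm.subst (sub2 v1 v2 t u))⟩
        [⟨Γ.image (Fm.subst (sub2 v1 v2 u t)), Δ.image (Fm.subst (sub2 v1 v2 u t))⟩]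
  | eqLa {Γ Δ : Finset Fm} {v1 v2 : ℕ} {t u : Tm} :
      Inf (.eqLa v1 v2 t u)
        ⟨insert (.eq t u) (Γ.image (Fm.subst (sub2 v1 v2 t u))),
          Δ.image (Fm.subst (sub2 v1 v2 t u))⟩
        [⟨insert (.eq t u) (Γ.image (Fm.subst (sub2 v1 v2 u t))),
          Δ.image (Fm.subst (sub2 v1 v2 u t))⟩]
  | add1R1 {Γ Δ : Finset Fm} {b : Tm} :
      Inf .add1R1 ⟨Γ, insert (.add1 .zero b b) Δ⟩ []
  | add1R2 {Γ Δ : Finset Fm} {a b c : Tm} :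
      Inf (.add1R2 a b c) ⟨Γ, insert (.add1 (.s a) b (.s c)) Δ⟩ [⟨Γ, insert (.add1 a b c) Δ⟩]
  | add2R1 {Γ Δ : Finset Fm} {b : Tm} :
      Inf .add2R1 ⟨Γ, insert (.add2 .zero b b) Δ⟩ []
  | add2R2 {Γ Δ : Finset Fm} {a b c : Tm} :
      Inf (.add2R2 a b c) ⟨Γ, insert (.add2 (.s a) b c) Δ⟩ [⟨Γ, insert (.add2 a (.s b) c) Δ⟩]
  | caseAdd1 {Γ Δ : Finset Fm} {a b c : Tm} {x y z : ℕ} :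
      x ≠ y → x ≠ z → y ≠ z →
      (∀ ψ ∈ insert (Fm.add1 a b c) (Γ ∪ Δ), x ∉ Fm.fv ψ ∧ y ∉ Fm.fv ψ ∧ z ∉ Fm.fv ψ) →
      Inf (.caseAdd1 a b c x y z) ⟨insert (.add1 a b c) Γ, Δ⟩
        [⟨insert (.eq a .zero) (insert (.eq b (.var y)) (insert (.eq c (.var y)) Γ)), Δ⟩,
         ⟨insert (.eq a (.s (.var x))) (insert (.eq b (.var y)) (insert (.eq c (.s (.var z)))
            (insert (.add1 (.var x) (.var y) (.var z)) Γ))), Δ⟩]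
  | caseAdd2 {Γ Δ : Finset Fm} {a b c : Tm} {x y z : ℕ} :
      x ≠ y → x ≠ z → y ≠ z →
      (∀ ψ ∈ insert (Fm.add2 a b c) (Γ ∪ Δ), x ∉ Fm.fv ψ ∧ y ∉ Fm.fv ψ ∧ z ∉ Fm.fv ψ) →
      Inf (.caseAdd2 a b c x y z) ⟨insert (.add2 a b c) Γ, Δ⟩
        [⟨insert (.eq a .zero) (insert (.eq b (.var y)) (insert (.eq c (.var y)) Γ)), Δ⟩,
         ⟨insert (.eq a (.s (.var x))) (insert (.eq b (.var y)) (insert (.eq c (.var z))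
            (insert (.add2 (.var x) (.s (.var y)) (.var z)) Γ))), Δ⟩]

/-- A labeling of tree nodes (finite sequences of naturals) by sequents and rules;
    `none` means the node is not in the tree. -/
abbrev Lbl : Type := List ℕ → Option (Seq × Rule)

/-- The children of `σ` are labeled exactly by the premise list `prems`. -/
def childrenOK (f : Lbl) (σ : List ℕ) (prems : List Seq) : Prop :=
  (∀ i : Fin prems.length, ∃ r', f (σ ++ [(i : ℕ)]) = some (prems.get i, r')) ∧
  (∀ i : ℕ, prems.length ≤ i → f (σ ++ [i]) = none)

/-- Derivation trees (possibly infinite): prefix-closed domain, each non-bud node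
    is the conclusion of a rule whose premises label its children, buds are leaves. -/
structure DTree where
  label : Lbl
  root_def : label [] ≠ none
  prefix_closed : ∀ σ τ : List ℕ, label (σ ++ τ) ≠ none → label σ ≠ none
  wf : ∀ σ S r, label σ = some (S, r) →
    (r = Rule.bud ∧ ∀ i : ℕ, label (σ ++ [i]) = none) ∨
    (r ≠ Rule.bud ∧ ∃ prems, Inf r S prems ∧ childrenOK label σ prems)

/-- `σ` is a bud of the labeling `f`. -/
def budAt (f : Lbl) (σ : List ℕ) : Prop := ∃ S, f σ = some (S, Rule.bud)

/-- `σ` is an inner node of `f` labeled with the sequent `S`. -/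
def innerWith (f : Lbl) (σ : List ℕ) (S : Seq) : Prop :=
  ∃ r, f σ = some (S, r) ∧ r ≠ Rule.bud

/-- A pre-proof: a finite derivation tree together with a function assigning to
    each bud a companion, i.e. an inner node labeled with the same sequent. -/
structure PreProof where
  D : DTree
  fin : {σ : List ℕ | D.label σ ≠ none}.Finite
  C : List ℕ → List ℕ
  comp : ∀ σ S, D.label σ = some (S, Rule.bud) → innerWith D.label (C σ) S

/-- Cycle-normality: every companion is an ancestor of its bud. -/
def PreProof.CycleNormal (P : PreProof) : Prop :=
  ∀ σ S, P.D.label σ = some (S, Rule.bud) → P.C σ <+: σ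

/-- `T` is the tree-unfolding of the pre-proof `P`: it agrees with `P.D` on
    non-bud nodes, below a bud it continues as below the bud's companion, and it
    is empty on nodes not in `P.D` having no bud prefix. -/
def IsUnfolding (P : PreProof) (T : Lbl) : Prop :=
  (∀ σ, P.D.label σ ≠ none → ¬ budAt P.D.label σ → T σ = P.D.label σ) ∧
  (∀ σ₁ σ₂ : List ℕ, budAt P.D.label σ₁ → T (σ₁ ++ σ₂) = T (P.C σ₁ ++ σ₂)) ∧
  (∀ σ, P.D.label σ = none → (∀ σ₁, σ₁ <+: σ → ¬ budAt P.D.label σ₁) → T σ = none)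

/-- An infinite path in the labeling `f`. -/
def IsInfPath (f : Lbl) (p : ℕ → List ℕ) : Prop :=
  (∀ i, f (p i) ≠ none) ∧ (∀ i, ∃ n : ℕ, p (i + 1) = p i ++ [n])

/-- Atomic formulas with an inductive predicate. -/
def isIndAtom (φ : Fm) : Prop :=
  (∃ a b c, φ = Fm.add1 a b c) ∨ (∃ a b c, φ = Fm.add2 a b c)

/-- A progressing trace step: the traced formula is the principal formula of a
    case rule and its successor (in the corresponding case distinction, child `j`)
    is a case-descendant. -/
def progStep : Rule → ℕ → Fm → Fm → Prop := fun r j τ τ' =>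
  match r with
  | .caseAdd1 a b c x y z =>
      τ = Fm.add1 a b c ∧ j = 1 ∧ τ' = Fm.add1 (.var x) (.var y) (.var z)
  | .caseAdd2 a b c x y z =>
      τ = Fm.add2 a b c ∧ j = 1 ∧ τ' = Fm.add2 (.var x) (.s (.var y)) (.var z)
  | _ => False

/-- The trace connection relation between the traced formula at a conclusion of a
    rule `r` and the traced formula at its `j`-th premise. -/
def connStep : Rule → ℕ → Fm → Fm → Prop := fun r j τ τ' =>
  match r with
  | .subst θ => τ = Fm.subst θ τ'
  | .eqL v1 v2 t u =>
      ∃ F : Fm, τ = Fm.subst (sub2 v1 v2 t u) F ∧ τ' = Fm.subst (sub2 v1 v2 u t) F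
  | .eqLa v1 v2 t u =>
      ∃ F : Fm, τ = Fm.subst (sub2 v1 v2 t u) F ∧ τ' = Fm.subst (sub2 v1 v2 u t) F
  | .caseAdd1 a b c x y z => τ' = τ ∨ progStep (.caseAdd1 a b c x y z) j τ τ'
  | .caseAdd2 a b c x y z => τ' = τ ∨ progStep (.caseAdd2 a b c x y z) j τ τ'
  | _ => τ' = τ

/-- `τ` is a trace following the tail from `k` of the path `p` in `f`. -/
def IsTraceFrom (f : Lbl) (p : ℕ → List ℕ) (k : ℕ) (τ : ℕ → Fm) : Prop :=
  ∀ i, k ≤ i →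
    ∃ (S : Seq) (r : Rule) (j : ℕ), f (p i) = some (S, r) ∧ τ i ∈ S.ant ∧ isIndAtom (τ i) ∧
      p (i + 1) = p i ++ [j] ∧ connStep r j (τ i) (τ (i + 1))

/-- The trace `τ` progresses at position `i` of the path `p`. -/
def progAt (f : Lbl) (p : ℕ → List ℕ) (τ : ℕ → Fm) (i : ℕ) : Prop :=
  ∃ (S : Seq) (r : Rule) (j : ℕ), f (p i) = some (S, r) ∧ p (i + 1) = p i ++ [j] ∧
    progStep r j (τ i) (τ (i + 1))

/-- The global trace condition for a (possibly infinite) labeling `f`. -/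
def GTC (f : Lbl) : Prop :=
  ∀ p : ℕ → List ℕ, IsInfPath f p →
    ∃ (k : ℕ) (τ : ℕ → Fm), IsTraceFrom f p k τ ∧
      ∀ n : ℕ, ∃ i, n ≤ i ∧ k ≤ i ∧ progAt f p τ i

/-- A pre-proof is a proof when its tree-unfolding satisfies the
    global trace condition. -/
def PreProof.IsProof (P : PreProof) : Prop := ∃ T : Lbl, IsUnfolding P T ∧ GTC T

/-- Some rule satisfying `Q` occurs in the labeling `f`. -/
def usesRule (f : Lbl) (Q : Rule → Prop) : Prop := ∃ σ S r, f σ = some (S, r) ∧ Q r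

/-- No occurrence of (Cut). -/
def PreProof.CutFree (P : PreProof) : Prop :=
  ¬ usesRule P.D.label (fun r => ∃ φ, r = Rule.cut φ)

/-- No occurrence of (= L_a): the pre-proof is a `CLKID^ω` pre-proof. -/
def PreProof.NoEqLa (P : PreProof) : Prop :=
  ¬ usesRule P.D.label (fun r => ∃ v1 v2 t u, r = Rule.eqLa v1 v2 t u)

/-- No occurrence of (= L): the pre-proof is a `CLKID^ω_a` pre-proof. -/
def PreProof.NoEqL (P : PreProof) : Prop :=
  ¬ usesRule P.D.label (fun r => ∃ v1 v2 t u, r = Rule.eqL v1 v2 t u)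

/-- The conclusion of the pre-proof is the sequent `S`. -/
def PreProof.Concl (P : PreProof) (S : Seq) : Prop := ∃ r, P.D.label [] = some (S, r)

/-- Provability in `CLKID^ω`. -/
def ProvableW (S : Seq) : Prop :=
  ∃ P : PreProof, P.IsProof ∧ P.NoEqLa ∧ P.Concl S

/-- Provability in `CLKID^ω_a`. -/
def ProvableWa (S : Seq) : Prop :=
  ∃ P : PreProof, P.IsProof ∧ P.NoEqL ∧ P.Concl S

/-- Cut-free provability in `CLKID^ω`. -/
def CutFreeProvableW (S : Seq) : Prop :=
  ∃ P : PreProof, P.IsProof ∧ P.CutFree ∧ P.NoEqLa ∧ P.Concl S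

/-- The sequent `Add2(x, y, z) ⊢ Add1(x, y, z)`. -/
def goalSeq : Seq :=
  ⟨{Fm.add2 (Tm.var 0) (Tm.var 1) (Tm.var 2)}, {Fm.add1 (Tm.var 0) (Tm.var 1) (Tm.var 2)}⟩

/-- A cut-free cycle-normal `CLKID^ω_a` proof of `Add2(x,y,z) ⊢ Add1(x,y,z)`. -/
def IsCNProofOfGoal (P : PreProof) : Prop :=
  P.IsProof ∧ P.CutFree ∧ P.NoEqL ∧ P.CycleNormal ∧ P.Concl goalSeq

/-- The index of an `Add2` atom with second argument `b` in the sequent `S` is `⊥`. -/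
def IndexBot (S : Seq) (b : Tm) : Prop :=
  ∀ a' b' c', Fm.add1 a' b' c' ∈ S.suc → ¬ DepTm (antSet S) b b'

/-- `σ` is a switching point of `f`: the conclusion of a `(Case Add2)` rule whose
    principal formula has index `⊥`. -/
def SwitchingPoint (f : Lbl) (σ : List ℕ) : Prop :=
  ∃ S a b c x y z, f σ = some (S, Rule.caseAdd2 a b c x y z) ∧ IndexBot S b

/-- `σ` is the conclusion of a `(Case Add2)` rule in `f`. -/
def CaseAdd2At (f : Lbl) (σ : List ℕ) : Prop :=
  ∃ S a b c x y z, f σ = some (S, Rule.caseAdd2 a b c x y z)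

/-- The node `σ` of `f` is labeled with an index sequent. -/
def IndexSequentAt (f : Lbl) (σ : List ℕ) : Prop :=
  ∃ S r, f σ = some (S, r) ∧ IndexSequent S

/-- A finite index path `p 0, …, p N` in `f`:  its first sequent is an index
    sequent, and a step to the left premise (child `0`) of a `(Case Add2)` rule
    only happens at switching points. -/
def IsIndexPathUpTo (f : Lbl) (p : ℕ → List ℕ) (N : ℕ) : Prop :=
  (∀ i, i ≤ N → f (p i) ≠ none) ∧
  (∀ i, i < N → ∃ n : ℕ, p (i + 1) = p i ++ [n]) ∧
  IndexSequentAt f (p 0) ∧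
  (∀ i, i < N → CaseAdd2At f (p i) → p (i + 1) = p i ++ [0] → SwitchingPoint f (p i))

/-- An infinite index path in `f`. -/
def IsInfIndexPath (f : Lbl) (p : ℕ → List ℕ) : Prop :=
  IsInfPath f p ∧
  IndexSequentAt f (p 0) ∧
  (∀ i, CaseAdd2At f (p i) → p (i + 1) = p i ++ [0] → SwitchingPoint f (p i))

/-- The child index chosen by the rightmost path: the right assumption of
    `(Case Add2)`, the unique premise otherwise. -/
def rightIdx : Rule → ℕ := fun r =>
  match r with
  | .caseAdd2 _ _ _ _ _ _ => 1
  | _ => 0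

/-- One step of the rightmost path in `f`. -/
def RightStep (f : Lbl) (σ σ' : List ℕ) : Prop :=
  ∃ S r, f σ = some (S, r) ∧ σ' = σ ++ [rightIdx r] ∧ f σ' ≠ none

/-- `A(Γ ⊢ Δ)` of Lemma `abc_relations`. -/
def Aset (S : Seq) : Set Tm :=
  {a | (∃ b c, Fm.add2 a b c ∈ S.ant) ∨ (∃ b c, Fm.add1 a b c ∈ S.suc) ∨ a = Tm.zero}

/-- `BC(Γ ⊢ Δ)` of Lemma `abc_relations`. -/
def BCset (S : Seq) : Set Tm :=
  {t | (∃ a c, Fm.add2 a t c ∈ S.ant) ∨ (∃ a b, Fm.add2 a b t ∈ S.ant) ∨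
       (∃ a c, Fm.add1 a t c ∈ S.suc) ∨ (∃ a b, Fm.add1 a b t ∈ S.suc)}

/-- The rules that can occur in a cut-free cycle-normal `CLKID^ω_a` proof of
    `Add2(x,y,z) ⊢ Add1(x,y,z)` (plus bud labels). -/
def allowedRule (r : Rule) : Prop :=
  r = Rule.bud ∨ r = Rule.weak ∨ (∃ θ, r = Rule.subst θ) ∨
  (∃ v1 v2 t u, r = Rule.eqLa v1 v2 t u) ∨
  (∃ a b c x y z, r = Rule.caseAdd2 a b c x y z) ∨
  r = Rule.add1R1 ∨ (∃ a b c, r = Rule.add1R2 a b c)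


/-!
In a cut-free proof of `Add2(x,y,z) ⊢ Add1(x,y,z)` every sequent has only equations and `Add2`
atoms on the left and only `Add1` atoms on the right. At such a sequent, if it is an index sequent,
neither an axiom nor `(Add1 R₁)` can be applied (the latter would make the second argument of an
`Add1` atom `~`-related to its third one), and each remaining rule has an index sequent as its
rightmost premise: the terms and the congruence `≡` of that premise map into those of the
conclusion, for `(Case Add2)` via `[x := a, y := b, z := c]` with balanced shifts. In a
cycle-normal proof every node of the unfolding is a copy of an inner node of the derivation tree,
so the rightmost path from an index sequent never stops.
-/

lemma exists_seq_of_forall_exists {α : Type*} {p : α → Prop} {R : α → α → Prop}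
    (h : ∀ a, p a → ∃ b, R a b ∧ p b) {a : α} (ha : p a) :
    ∃ f : ℕ → α, f 0 = a ∧ ∀ n, R (f n) (f (n + 1)) := by
  choose g hg using fun x : {a // p a} => h x.1 x.2
  let F : {a // p a} → {a // p a} := fun x => ⟨g x, (hg x).2⟩
  refine ⟨fun n => (F^[n] ⟨a, ha⟩).1, rfl, fun n => ?_⟩
  simpa only [Function.iterate_succ_apply'] using (hg _).1

lemma sIter_s (n : ℕ) (t : Tm) : sIter n (Tm.s t) = sIter (n + 1) t := by
  induction n with
  | zero => rfl
  | succ n ih => simp only [sIter, ih]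

lemma sIter_sIter (n m : ℕ) (t : Tm) : sIter n (sIter m t) = sIter (n + m) t := by
  induction n with
  | zero => rw [sIter, Nat.zero_add]
  | succ n ih => rw [sIter, ih, Nat.add_right_comm, sIter]

lemma Tm.subst_sIter (θ : ℕ → Tm) (n : ℕ) (t : Tm) :
    (sIter n t).subst θ = sIter n (t.subst θ) := by
  induction n with
  | zero => rfl
  | succ n ih => simp only [sIter, Tm.subst, ih]

lemma Tm.subst_eq_self {θ : ℕ → Tm} {t : Tm} (h : ∀ v ∈ t.fv, θ v = Tm.var v) :
    t.subst θ = t := by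
  induction t with
  | var x => exact h x rfl
  | zero => rfl
  | s t ih => rw [Tm.subst, ih h]

namespace EqvTm

variable {Γ Γ' : Set Fm}

lemma of_forall_base (h : ∀ t u, Fm.eq t u ∈ Γ → EqvTm Γ' t u) {t u : Tm}
    (htu : EqvTm Γ t u) : EqvTm Γ' t u := by
  induction htu with
  | base hm => exact h _ _ hm
  | refl t => exact .refl t
  | symm _ ih => exact ih.symm
  | trans _ _ ih₁ ih₂ => exact ih₁.trans ih₂
  | sCongr _ ih => exact ih.sCongr

lemma mono (hΓ : Γ ⊆ Γ') {t u : Tm} : EqvTm Γ t u → EqvTm Γ' t u :=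
  of_forall_base fun _ _ hm => .base (hΓ hm)

lemma sIter_congr (n : ℕ) {t u : Tm} (h : EqvTm Γ t u) : EqvTm Γ (sIter n t) (sIter n u) := by
  induction n with
  | zero => exact h
  | succ n ih => exact ih.sCongr

lemma image_subst (θ : ℕ → Tm) {t u : Tm} (h : EqvTm Γ t u) :
    EqvTm (Fm.subst θ '' Γ) (t.subst θ) (u.subst θ) := by
  induction h with
  | base hm => exact .base ⟨_, hm, rfl⟩
  | refl t => exact .refl _
  | symm _ ih => exact ih.symm
  | trans _ _ ih₁ ih₂ => exact ih₁.trans ih₂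
  | sCongr _ ih => exact ih.sCongr

end EqvTm

namespace DepTm

variable {Γ : Set Fm}

lemma refl (t : Tm) : DepTm Γ t t := ⟨0, 0, .refl t⟩

lemma of_eqvTm {t u : Tm} (h : EqvTm Γ t u) : DepTm Γ t u := ⟨0, 0, h⟩

lemma trans {t u v : Tm} : DepTm Γ t u → DepTm Γ u v → DepTm Γ t v := by
  rintro ⟨n, m, h₁⟩ ⟨p, q, h₂⟩
  refine ⟨p + n, m + q, ?_⟩
  have h₁' := h₁.sIter_congr p
  have h₂' := h₂.sIter_congr m
  rw [sIter_sIter, sIter_sIter] at h₁' h₂'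
  rw [Nat.add_comm p m] at h₁'
  exact h₁'.trans h₂'

end DepTm

def Fm.IsAdd1 (φ : Fm) : Prop := ∃ a b c, φ = .add1 a b c

def Fm.IsEqOrAdd2 (φ : Fm) : Prop := (∃ t u, φ = .eq t u) ∨ ∃ a b c, φ = .add2 a b c

@[simp] lemma Fm.isAdd1_subst (θ : ℕ → Tm) (φ : Fm) : (φ.subst θ).IsAdd1 ↔ φ.IsAdd1 := by
  cases φ <;> simp [Fm.subst, Fm.IsAdd1]

@[simp] lemma Fm.isEqOrAdd2_subst (θ : ℕ → Tm) (φ : Fm) :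
    (φ.subst θ).IsEqOrAdd2 ↔ φ.IsEqOrAdd2 := by
  cases φ <;> simp [Fm.subst, Fm.IsEqOrAdd2]

def Shaped (S : Seq) : Prop := (∀ φ ∈ S.ant, φ.IsEqOrAdd2) ∧ ∀ φ ∈ S.suc, φ.IsAdd1

lemma shaped_goalSeq : Shaped goalSeq := by
  simp [Shaped, goalSeq, Fm.IsAdd1, Fm.IsEqOrAdd2]

lemma Shaped.of_inf {S : Seq} {r : Rule} {prems : List Seq} (hS : Shaped S)
    (hr : Inf r S prems) (hcut : ∀ φ, r ≠ Rule.cut φ) : ∀ S' ∈ prems, Shaped S' := by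
  cases hr with
  | weak hΓ hΔ =>
    simp only [List.mem_singleton, forall_eq]
    exact ⟨fun φ hφ => hS.1 φ (hΓ hφ), fun φ hφ => hS.2 φ (hΔ hφ)⟩
  -- every other rule either keeps the shape or has a principal formula of an excluded shape
  | _ => simp_all [Shaped] <;> simp_all [Fm.IsAdd1, Fm.IsEqOrAdd2]

lemma IndexSequent.of_reduction {S S' : Seq} (f : Tm → Tm) (hS : IndexSequent S)
    (hB : ∀ b ∈ B1 S', ∃ b₀ ∈ B1 S, EqvTm (antSet S) (f b) b₀)
    (hC : ∀ c ∈ Cset S', ∃ c₀ ∈ Cset S, DepTm (antSet S) (f c) c₀)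
    (hEqv : ∀ b ∈ B1 S', ∀ u ∈ B1 S' ∪ Cset S', ∀ n m,
      EqvTm (antSet S') (sIter n b) (sIter m u) →
      ∃ k, EqvTm (antSet S) (sIter k (sIter n (f b))) (sIter k (sIter m (f u)))) :
    IndexSequent S' := by
  constructor
  · rintro b hb c hc ⟨n, m, h⟩
    obtain ⟨b₀, hb₀, hbb₀⟩ := hB b hb
    obtain ⟨c₀, hc₀, hcc₀⟩ := hC c hc
    obtain ⟨k, hk⟩ := hEqv b hb c (Or.inr hc) n m h
    rw [sIter_sIter, sIter_sIter] at hk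
    exact hS.1 b₀ hb₀ c₀ hc₀ <|
      ((DepTm.of_eqvTm hbb₀.symm).trans ⟨_, _, hk⟩).trans hcc₀
  · intro b hb b' hb' n m h
    obtain ⟨b₀, hb₀, hbb₀⟩ := hB b hb
    obtain ⟨b₀', hb₀', hbb₀'⟩ := hB b' hb'
    obtain ⟨k, hk⟩ := hEqv b hb b' (Or.inl hb') n m h
    rw [sIter_sIter, sIter_sIter] at hk
    have := hS.2 b₀ hb₀ b₀' hb₀' (k + n) (k + m)
      (((hbb₀.sIter_congr _).symm.trans hk).trans (hbb₀'.sIter_congr _))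
    omega

lemma Fm.subst_eq_add1_iff {θ : ℕ → Tm} {φ : Fm} {a b c : Tm} :
    φ.subst θ = .add1 a b c ↔
      ∃ a' b' c', φ = .add1 a' b' c' ∧ a'.subst θ = a ∧ b'.subst θ = b ∧ c'.subst θ = c := by
  cases φ <;> simp [Fm.subst]

lemma Fm.subst_eq_add2_iff {θ : ℕ → Tm} {φ : Fm} {a b c : Tm} :
    φ.subst θ = .add2 a b c ↔
      ∃ a' b' c', φ = .add2 a' b' c' ∧ a'.subst θ = a ∧ b'.subst θ = b ∧ c'.subst θ = c := by
  cases φ <;> simp [Fm.subst]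

lemma Fm.subst_eq_eq_iff {θ : ℕ → Tm} {φ : Fm} {t u : Tm} :
    φ.subst θ = .eq t u ↔ ∃ t' u', φ = .eq t' u' ∧ t'.subst θ = t ∧ u'.subst θ = u := by
  cases φ <;> simp [Fm.subst]

lemma B1_image_subst (θ : ℕ → Tm) (Γ Δ : Finset Fm) :
    B1 ⟨Γ.image (Fm.subst θ), Δ.image (Fm.subst θ)⟩ = Tm.subst θ '' B1 ⟨Γ, Δ⟩ := by
  ext b
  simp only [B1, Finset.mem_image, Fm.subst_eq_add1_iff, Set.mem_image, Set.mem_ofPred_eq]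
  aesop

lemma Cset_image_subst (θ : ℕ → Tm) (Γ Δ : Finset Fm) :
    Cset ⟨Γ.image (Fm.subst θ), Δ.image (Fm.subst θ)⟩ = Tm.subst θ '' Cset ⟨Γ, Δ⟩ := by
  ext c
  simp only [Cset, Finset.mem_image, Fm.subst_eq_add1_iff, Fm.subst_eq_add2_iff, Set.mem_image,
    Set.mem_ofPred_eq]
  aesop

lemma Cset_insert_eq (t u : Tm) (Γ Δ : Finset Fm) :
    Cset ⟨insert (.eq t u) Γ, Δ⟩ = Cset ⟨Γ, Δ⟩ := by
  simp [Cset]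

section Premises

variable {Γ Δ : Finset Fm}

lemma IndexSequent.weak_premise {Γ' Δ' : Finset Fm} (hΓ : Γ' ⊆ Γ) (hΔ : Δ' ⊆ Δ)
    (hS : IndexSequent ⟨Γ, Δ⟩) : IndexSequent ⟨Γ', Δ'⟩ :=
  hS.of_reduction id (fun b ⟨a, c, h⟩ => ⟨b, ⟨a, c, hΔ h⟩, .refl b⟩)
    (fun c hc => ⟨c, hc.imp (fun ⟨a, b, h⟩ => ⟨a, b, hΓ h⟩) (fun ⟨a, b, h⟩ => ⟨a, b, hΔ h⟩),
      .refl c⟩)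
    (fun _ _ _ _ _ _ h => ⟨0, h.mono (Finset.coe_subset.2 hΓ)⟩)

lemma IndexSequent.subst_premise (θ : ℕ → Tm)
    (hS : IndexSequent ⟨Γ.image (Fm.subst θ), Δ.image (Fm.subst θ)⟩) :
    IndexSequent ⟨Γ, Δ⟩ :=
  hS.of_reduction (Tm.subst θ)
    (fun b hb => ⟨_, B1_image_subst θ Γ Δ ▸ Set.mem_image_of_mem _ hb, .refl _⟩)
    (fun c hc => ⟨_, Cset_image_subst θ Γ Δ ▸ Set.mem_image_of_mem _ hc, .refl _⟩)
    (fun _ _ _ _ _ _ h => ⟨0, by simpa [antSet, Tm.subst_sIter, sIter] using h.image_subst θ⟩)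

lemma EqvTm.subst_sub2_swap {A : Set Fm} {v1 v2 : ℕ} {t u : Tm} (hA : Fm.eq t u ∈ A)
    (w : Tm) : EqvTm A (w.subst (sub2 v1 v2 u t)) (w.subst (sub2 v1 v2 t u)) := by
  induction w with
  | var v =>
    simp only [Tm.subst, sub2]
    split_ifs
    exacts [(EqvTm.base hA).symm, .base hA, .refl _]
  | zero => exact .refl _
  | s w ih => exact ih.sCongr

lemma IndexSequent.eqLa_premise {v1 v2 : ℕ} {t u : Tm}
    (hS : IndexSequent ⟨insert (.eq t u) (Γ.image (Fm.subst (sub2 v1 v2 t u))),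
      Δ.image (Fm.subst (sub2 v1 v2 t u))⟩) :
    IndexSequent ⟨insert (.eq t u) (Γ.image (Fm.subst (sub2 v1 v2 u t))),
      Δ.image (Fm.subst (sub2 v1 v2 u t))⟩ := by
  set θ := sub2 v1 v2 t u
  set θ' := sub2 v1 v2 u t
  have htu : Fm.eq t u ∈ (↑(insert (.eq t u) (Γ.image (Fm.subst θ))) : Set Fm) := by simp
  have swap := EqvTm.subst_sub2_swap (v1 := v1) (v2 := v2) htu
  have hEqv : ∀ {p q}, EqvTm (↑(insert (.eq t u) (Γ.image (Fm.subst θ')))) p q →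
      EqvTm (↑(insert (.eq t u) (Γ.image (Fm.subst θ)))) p q := by
    refine EqvTm.of_forall_base fun p q hm => ?_
    simp only [Finset.coe_insert, Finset.coe_image, Set.mem_insert_iff, Set.mem_image,
      Fm.eq.injEq, Fm.subst_eq_eq_iff] at hm
    rcases hm with ⟨rfl, rfl⟩ | ⟨_, hm, p', q', rfl, rfl, rfl⟩
    · exact .base htu
    · have hmθ : Fm.eq (p'.subst θ) (q'.subst θ) ∈ insert (.eq t u) (Γ.image (Fm.subst θ)) :=
        Finset.mem_insert_of_mem (Finset.mem_image_of_mem _ hm)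
      exact ((swap p').trans (.base hmθ)).trans (swap q').symm
  refine hS.of_reduction id ?_ ?_ fun _ _ _ _ _ _ h => ⟨0, hEqv h⟩
  · intro b hb
    obtain ⟨b', hb', rfl⟩ := (B1_image_subst θ' Γ Δ ▸ hb : b ∈ Tm.subst θ' '' _)
    exact ⟨b'.subst θ, B1_image_subst θ Γ Δ ▸ Set.mem_image_of_mem _ hb', swap b'⟩
  · intro c hc
    rw [Cset_insert_eq, Cset_image_subst] at hc
    obtain ⟨c', hc', rfl⟩ := hc
    refine ⟨c'.subst θ, ?_, .of_eqvTm (swap c')⟩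
    rw [Cset_insert_eq, Cset_image_subst]
    exact Set.mem_image_of_mem _ hc'

lemma IndexSequent.add1R2_premise {a b c : Tm}
    (hS : IndexSequent ⟨Γ, insert (.add1 (.s a) b (.s c)) Δ⟩) :
    IndexSequent ⟨Γ, insert (.add1 a b c) Δ⟩ := by
  refine hS.of_reduction id ?_ ?_ fun _ _ _ _ _ _ h => ⟨0, h⟩
  · rintro b' ⟨a', c', h⟩
    rcases Finset.mem_insert.1 h with h | h
    · cases h
      exact ⟨b, ⟨_, _, Finset.mem_insert_self _ _⟩, .refl b⟩
    · exact ⟨b', ⟨a', c', Finset.mem_insert_of_mem h⟩, .refl b'⟩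
  · rintro c' (⟨a', b', h⟩ | ⟨a', b', h⟩)
    · exact ⟨c', Or.inl ⟨a', b', h⟩, .refl c'⟩
    rcases Finset.mem_insert.1 h with h | h
    · cases h
      exact ⟨.s c, Or.inr ⟨_, _, Finset.mem_insert_self _ _⟩, ⟨1, 0, .refl _⟩⟩
    · exact ⟨c', Or.inr ⟨a', b', Finset.mem_insert_of_mem h⟩, .refl c'⟩

end Premises

lemma EqvTm.shifted_map {Γ Γ' : Set Fm} (g : Tm → Tm) (w : Tm → ℕ)
    (hg : ∀ t, g (.s t) = .s (g t)) (hw : ∀ t, w (.s t) = w t)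
    (hbase : ∀ p q, Fm.eq p q ∈ Γ' →
      ∃ k l, EqvTm Γ (sIter k (g p)) (sIter l (g q)) ∧ k + w p = l + w q)
    {t u : Tm} (h : EqvTm Γ' t u) :
    ∃ k l, EqvTm Γ (sIter k (g t)) (sIter l (g u)) ∧ k + w t = l + w u := by
  induction h with
  | base hm => exact hbase _ _ hm
  | refl t => exact ⟨0, 0, .refl _, rfl⟩
  | symm _ ih =>
    obtain ⟨k, l, h, hkl⟩ := ih
    exact ⟨l, k, h.symm, hkl.symm⟩
  | trans _ _ ih₁ ih₂ =>
    obtain ⟨k, l, h₁, hkl⟩ := ih₁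
    obtain ⟨k', l', h₂, hkl'⟩ := ih₂
    refine ⟨k' + k, l + l', ?_, by omega⟩
    have h₁' := h₁.sIter_congr k'
    have h₂' := h₂.sIter_congr l
    rw [sIter_sIter, sIter_sIter] at h₁' h₂'
    rw [Nat.add_comm k' l] at h₁'
    exact h₁'.trans h₂'
  | sCongr _ ih =>
    obtain ⟨k, l, h, hkl⟩ := ih
    refine ⟨k, l, ?_, by rwa [hw, hw]⟩
    rw [hg, hg, sIter_s, sIter_s]
    exact h.sCongr

lemma Tm.varOf_sIter (n : ℕ) (t : Tm) : (sIter n t).varOf = t.varOf := by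
  induction n with
  | zero => rfl
  | succ n ih => exact ih

lemma Tm.varOf_ne_of_notMem_fv {x : ℕ} {t : Tm} (h : x ∉ t.fv) : t.varOf ≠ some x := by
  induction t with
  | var y => rintro ⟨⟩; exact h rfl
  | zero => rintro ⟨⟩
  | s t ih => exact ih h

def sub3 (x y z : ℕ) (a b c : Tm) : ℕ → Tm :=
  fun v => if v = x then a else if v = y then b else if v = z then c else Tm.var v

lemma Tm.subst_sub3_of_notMem {x y z : ℕ} {a b c t : Tm}
    (hx : x ∉ t.fv) (hy : y ∉ t.fv) (hz : z ∉ t.fv) : t.subst (sub3 x y z a b c) = t := by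
  refine Tm.subst_eq_self fun v hv => ?_
  have : v ≠ x ∧ v ≠ y ∧ v ≠ z := ⟨(hx <| · ▸ hv), (hy <| · ▸ hv), (hz <| · ▸ hv)⟩
  simp [sub3, this]

section CaseAdd2

variable {Γ Δ : Finset Fm} {a b c : Tm} {x y z : ℕ}

abbrev caseAdd2Ant (Γ : Finset Fm) (a b c : Tm) (x y z : ℕ) : Finset Fm :=
  insert (.eq a (.s (.var x))) (insert (.eq b (.var y)) (insert (.eq c (.var z))
    (insert (.add2 (.var x) (.s (.var y)) (.var z)) Γ)))

lemma notMem_fv_of_subset {ψ : Fm} (hψ : x ∉ ψ.fv ∧ y ∉ ψ.fv ∧ z ∉ ψ.fv) {t : Tm}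
    (ht : t.fv ⊆ ψ.fv) : x ∉ t.fv ∧ y ∉ t.fv ∧ z ∉ t.fv :=
  hψ.imp (mt (@ht _)) <| And.imp (mt (@ht _)) (mt (@ht _))

/-- Under `[x := a, y := b, z := c]` the equation `a = s x` holds only as `s a ≡ s a`, one `s`
short on the left; weighting terms by the occurrences of `x` keeps track of these shifts. -/
lemma EqvTm.of_caseAdd2Ant (hxy : x ≠ y) (hxz : x ≠ z) (hyz : y ≠ z)
    (hfr : ∀ ψ ∈ insert (Fm.add2 a b c) Γ, x ∉ Fm.fv ψ ∧ y ∉ Fm.fv ψ ∧ z ∉ Fm.fv ψ)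
    {t u : Tm} (h : EqvTm ↑(caseAdd2Ant Γ a b c x y z) t u) :
    ∃ k l, EqvTm ↑(insert (Fm.add2 a b c) Γ)
        (sIter k (t.subst (sub3 x y z a b c))) (sIter l (u.subst (sub3 x y z a b c))) ∧
      k + (if t.varOf = some x then 1 else 0) = l + (if u.varOf = some x then 1 else 0) := by
  have hfresh : ∀ {ψ}, ψ ∈ insert (Fm.add2 a b c) Γ → ∀ {t : Tm}, t.fv ⊆ ψ.fv →
      t.subst (sub3 x y z a b c) = t ∧ t.varOf ≠ some x := fun hψ _ ht => by
    obtain ⟨hx, hy, hz⟩ := notMem_fv_of_subset (hfr _ hψ) ht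
    exact ⟨Tm.subst_sub3_of_notMem hx hy hz, Tm.varOf_ne_of_notMem_fv hx⟩
  have hprin := Finset.mem_insert_self (Fm.add2 a b c) Γ
  obtain ⟨ha, ha'⟩ := hfresh hprin fun _ hv => Or.inl (Or.inl hv)
  obtain ⟨hb, hb'⟩ := hfresh hprin fun _ hv => Or.inl (Or.inr hv)
  obtain ⟨hc, hc'⟩ := hfresh hprin fun _ hv => Or.inr hv
  refine EqvTm.shifted_map (Tm.subst (sub3 x y z a b c))
    (fun t => if t.varOf = some x then 1 else 0) (fun _ => rfl) (fun _ => rfl) (fun p q hm => ?_) h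
  simp only [Finset.coe_insert, Set.mem_insert_iff, Fm.eq.injEq, reduceCtorEq, false_or,
    Finset.mem_coe] at hm
  rcases hm with ⟨rfl, rfl⟩ | ⟨rfl, rfl⟩ | ⟨rfl, rfl⟩ | hm
  · refine ⟨1, 0, ?_, ?_⟩ <;> simp [Tm.subst, sub3, sIter, ha, ha', Tm.varOf]
    exact .refl _
  · refine ⟨0, 0, ?_, ?_⟩ <;> simp [Tm.subst, sub3, sIter, hb, hb', Tm.varOf, hxy.symm]
    exact .refl _
  · refine ⟨0, 0, ?_, ?_⟩ <;> simp [Tm.subst, sub3, sIter, hc, hc', Tm.varOf, hxz.symm, hyz.symm]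
    exact .refl _
  · have hψ : Fm.eq p q ∈ insert (Fm.add2 a b c) Γ := Finset.mem_insert_of_mem hm
    obtain ⟨hp, hp'⟩ := hfresh hψ fun _ hv => Or.inl hv
    obtain ⟨hq, hq'⟩ := hfresh hψ fun _ hv => Or.inr hv
    exact ⟨0, 0, by simpa [sIter, hp, hq] using EqvTm.base hψ, by simp [hp', hq']⟩

lemma IndexSequent.caseAdd2_premise (hxy : x ≠ y) (hxz : x ≠ z) (hyz : y ≠ z)
    (hfr : ∀ ψ ∈ insert (Fm.add2 a b c) (Γ ∪ Δ), x ∉ Fm.fv ψ ∧ y ∉ Fm.fv ψ ∧ z ∉ Fm.fv ψ)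
    (hS : IndexSequent ⟨insert (.add2 a b c) Γ, Δ⟩) :
    IndexSequent ⟨caseAdd2Ant Γ a b c x y z, Δ⟩ := by
  set ρ := sub3 x y z a b c
  have hfrΓ : ∀ ψ ∈ insert (Fm.add2 a b c) Γ, x ∉ Fm.fv ψ ∧ y ∉ Fm.fv ψ ∧ z ∉ Fm.fv ψ :=
    fun ψ hψ => hfr ψ (Finset.insert_subset_insert _ Finset.subset_union_left hψ)
  have hfrΔ : ∀ ψ ∈ Δ, x ∉ Fm.fv ψ ∧ y ∉ Fm.fv ψ ∧ z ∉ Fm.fv ψ :=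
    fun ψ hψ => hfr ψ (Finset.mem_insert_of_mem (Finset.mem_union_right Γ hψ))
  have hB1 : ∀ t ∈ B1 ⟨caseAdd2Ant Γ a b c x y z, Δ⟩, x ∉ t.fv ∧ y ∉ t.fv ∧ z ∉ t.fv :=
    fun t ⟨_, _, h⟩ => notMem_fv_of_subset (hfrΔ _ h) fun _ hv => Or.inl (Or.inr hv)
  have hCset : ∀ t ∈ Cset ⟨caseAdd2Ant Γ a b c x y z, Δ⟩,
      t = .var z ∨ t ∈ Cset ⟨insert (.add2 a b c) Γ, Δ⟩ ∧ x ∉ t.fv ∧ y ∉ t.fv ∧ z ∉ t.fv := by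
    rintro t (⟨a', b', h⟩ | ⟨a', b', h⟩)
    · simp only [Finset.mem_insert, reduceCtorEq, false_or, Fm.add2.injEq] at h
      rcases h with ⟨-, -, rfl⟩ | h
      · exact Or.inl rfl
      · exact Or.inr ⟨Or.inl ⟨a', b', Finset.mem_insert_of_mem h⟩,
          notMem_fv_of_subset (hfrΓ _ (Finset.mem_insert_of_mem h)) fun _ hv => Or.inr hv⟩
    · exact Or.inr ⟨Or.inr ⟨a', b', h⟩, notMem_fv_of_subset (hfrΔ _ h) fun _ hv => Or.inr hv⟩
  refine hS.of_reduction (Tm.subst ρ) ?_ ?_ ?_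
  · intro t ht
    obtain ⟨hx, hy, hz⟩ := hB1 t ht
    exact ⟨t, ht, by rw [Tm.subst_sub3_of_notMem hx hy hz]; exact .refl t⟩
  · intro t ht
    rcases hCset t ht with rfl | ⟨ht, hx, hy, hz⟩
    · refine ⟨c, Or.inl ⟨a, b, Finset.mem_insert_self _ _⟩, ?_⟩
      simpa [ρ, Tm.subst, sub3, hxz.symm, hyz.symm] using DepTm.refl c
    · exact ⟨t, ht, by rw [Tm.subst_sub3_of_notMem hx hy hz]; exact .refl t⟩
  · intro t ht u hu n m h
    obtain ⟨k, l, hE, hkl⟩ := EqvTm.of_caseAdd2Ant hxy hxz hyz hfrΓ h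
    have hux : u.varOf ≠ some x := by
      rcases hu with hu | hu
      · exact Tm.varOf_ne_of_notMem_fv (hB1 u hu).1
      rcases hCset u hu with rfl | ⟨-, hx, -⟩
      · simpa [Tm.varOf] using hxz.symm
      · exact Tm.varOf_ne_of_notMem_fv hx
    simp only [Tm.varOf_sIter, Tm.varOf_ne_of_notMem_fv (hB1 t ht).1, hux, if_false,
      Nat.add_zero] at hkl
    subst hkl
    exact ⟨k, by rwa [Tm.subst_sIter, Tm.subst_sIter] at hE⟩

end CaseAdd2

lemma IndexSequent.exists_rightPremise {S : Seq} {r : Rule} {prems : List Seq} (hsh : Shaped S)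
    (hS : IndexSequent S) (hr : Inf r S prems) (hcut : ∀ φ, r ≠ Rule.cut φ)
    (heqL : ∀ v1 v2 t u, r ≠ Rule.eqL v1 v2 t u) :
    ∃ S', prems[rightIdx r]? = some S' ∧ IndexSequent S' := by
  cases hr with
  | weak hΓ hΔ => exact ⟨_, rfl, hS.weak_premise hΓ hΔ⟩
  | subst => exact ⟨_, rfl, hS.subst_premise _⟩
  | eqLa => exact ⟨_, rfl, hS.eqLa_premise⟩
  | add1R2 => exact ⟨_, rfl, hS.add1R2_premise⟩
  | caseAdd2 hxy hxz hyz hfr => exact ⟨_, rfl, hS.caseAdd2_premise hxy hxz hyz hfr⟩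
  | add1R1 =>
    exact (hS.1 _ ⟨_, _, Finset.mem_insert_self _ _⟩ _
      (Or.inr ⟨_, _, Finset.mem_insert_self _ _⟩) (.refl _)).elim
  | cut => exact absurd rfl (hcut _)
  | eqL => exact absurd rfl (heqL _ _ _ _)
  | ax h =>
    obtain ⟨φ, hφ⟩ := h
    obtain ⟨a, b, c, rfl⟩ := hsh.2 φ (Finset.mem_inter.1 hφ).2
    simpa [Fm.IsEqOrAdd2] using hsh.1 _ (Finset.mem_inter.1 hφ).1
  | _ => simp [Shaped, Fm.IsAdd1, Fm.IsEqOrAdd2] at hsh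

namespace PreProof

variable {P : PreProof}

lemma shaped_of_label (hcut : P.CutFree) (hconcl : P.Concl goalSeq) :
    ∀ {σ S r}, P.D.label σ = some (S, r) → Shaped S := by
  intro σ
  induction σ using List.reverseRecOn with
  | nil =>
    intro S r h
    obtain ⟨r₀, h₀⟩ := hconcl
    cases h.symm.trans h₀
    exact shaped_goalSeq
  | append_singleton σ j ih =>
    intro S r h
    obtain ⟨⟨S₀, r₀⟩, h₀⟩ := Option.ne_none_iff_exists'.1
      (P.D.prefix_closed σ [j] (by simp [h]))
    rcases P.D.wf σ S₀ r₀ h₀ with ⟨-, hleaf⟩ | ⟨-, prems, hr, hch, hnone⟩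
    · simp [hleaf j] at h
    have hj : j < prems.length := by
      by_contra hj
      simp [hnone j (not_lt.1 hj)] at h
    obtain ⟨r', hj'⟩ := hch ⟨j, hj⟩
    cases h.symm.trans hj'
    exact (ih h₀).of_inf hr (fun φ hφ => hcut ⟨σ, S₀, r₀, h₀, φ, hφ⟩) _ (List.get_mem _ _)

variable {T : Lbl}

lemma label_eq_of_inner (hT : IsUnfolding P T) {σ : List ℕ} {S : Seq} {r : Rule}
    (h : P.D.label σ = some (S, r)) (hr : r ≠ Rule.bud) : T σ = some (S, r) := by
  rw [hT.1 σ (by simp [h]) fun ⟨_, h'⟩ => hr (by simp_all)]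
  exact h

lemma unfolding_append_companion (hT : IsUnfolding P T) {σ : List ℕ} {S : Seq}
    (h : P.D.label σ = some (S, Rule.bud)) (τ : List ℕ) : T (σ ++ τ) = T (P.C σ ++ τ) :=
  hT.2.1 σ τ ⟨S, h⟩

lemma exists_unfolding_label (hT : IsUnfolding P T) {σ : List ℕ} {S : Seq} {r : Rule}
    (h : P.D.label σ = some (S, r)) : ∃ r', T σ = some (S, r') := by
  by_cases hr : r = Rule.bud
  · subst hr
    obtain ⟨r', hC, hr'⟩ := P.comp σ S h
    refine ⟨r', ?_⟩
    simpa [label_eq_of_inner hT hC hr'] using unfolding_append_companion hT h []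
  · exact ⟨r, label_eq_of_inner hT h hr⟩

lemma exists_inner_of_unfolding (hcn : P.CycleNormal) (hT : IsUnfolding P T) {σ : List ℕ}
    (hσ : T σ ≠ none) : ∃ δ S r, P.D.label δ = some (S, r) ∧ r ≠ Rule.bud ∧
      ∀ τ, T (σ ++ τ) = T (δ ++ τ) := by
  induction hn : σ.length using Nat.strong_induction_on generalizing σ with
  | _ n ih =>
  cases hD : P.D.label σ with
  | some p =>
    obtain ⟨S, r⟩ := p
    by_cases hr : r = Rule.bud
    · subst hr
      obtain ⟨r', hC, hr'⟩ := P.comp σ S hD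
      exact ⟨P.C σ, S, r', hC, hr', unfolding_append_companion hT hD⟩
    · exact ⟨σ, S, r, hD, hr, fun _ => rfl⟩
  | none =>
    obtain ⟨σ₁, ⟨σ₂, rfl⟩, S₁, hS₁⟩ : ∃ σ₁, σ₁ <+: σ ∧ budAt P.D.label σ₁ := by
      by_contra hbud
      exact hσ (hT.2.2 σ hD fun σ₁ h hb => hbud ⟨σ₁, h, hb⟩)
    obtain ⟨r', hC, hr'⟩ := P.comp σ₁ S₁ hS₁
    have hshift (τ : List ℕ) : T (σ₁ ++ σ₂ ++ τ) = T (P.C σ₁ ++ σ₂ ++ τ) := by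
      simpa using unfolding_append_companion hT hS₁ (σ₂ ++ τ)
    -- cycle normality makes the companion a strict prefix of the bud, so the recursion terminates
    have hlt : (P.C σ₁).length < σ₁.length := by
      refine lt_of_le_of_ne (hcn σ₁ S₁ hS₁).length_le fun hlen => ?_
      rw [(hcn σ₁ S₁ hS₁).eq_of_length hlen, hS₁] at hC
      simp_all
    have hσ' : T (P.C σ₁ ++ σ₂) ≠ none := by
      rwa [← List.append_nil (P.C σ₁ ++ σ₂), ← hshift, List.append_nil]
    obtain ⟨δ, S, r, hδ, hr, hsub⟩ :=
      ih (P.C σ₁ ++ σ₂).length (by simp only [List.length_append] at hn ⊢; omega) hσ' rfl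
    exact ⟨δ, S, r, hδ, hr, fun τ => (hshift τ).trans (hsub τ)⟩

end PreProof

lemma PreProof.exists_rightStep {P : PreProof} {T : Lbl} (hP : IsCNProofOfGoal P)
    (hT : IsUnfolding P T) {σ : List ℕ} (hσ : IndexSequentAt T σ) :
    ∃ σ', RightStep T σ σ' ∧ IndexSequentAt T σ' := by
  obtain ⟨-, hcut, hnoEqL, hcn, hconcl⟩ := hP
  obtain ⟨S, r, hTσ, hS⟩ := hσ
  obtain ⟨δ, S₀, r₀, hδ, hr₀, hsub⟩ := P.exists_inner_of_unfolding hcn hT (σ := σ) (by simp [hTσ])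
  have hTσ₀ : T σ = some (S₀, r₀) := by
    simpa [P.label_eq_of_inner hT hδ hr₀] using hsub []
  cases hTσ.symm.trans hTσ₀
  obtain ⟨-, prems, hr, hch, -⟩ := (P.D.wf δ S r hδ).resolve_left fun h => hr₀ h.1
  obtain ⟨S', hS', hidx⟩ := hS.exists_rightPremise (P.shaped_of_label hcut hconcl hδ) hr
    (fun φ h => hcut ⟨δ, S, r, hδ, φ, h⟩) (fun v1 v2 t u h => hnoEqL ⟨δ, S, r, hδ, v1, v2, t, u, h⟩)
  obtain ⟨hj, rfl⟩ := List.getElem?_eq_some_iff.1 hS'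
  obtain ⟨r', hr'⟩ := hch ⟨rightIdx r, hj⟩
  obtain ⟨r'', hT'⟩ := P.exists_unfolding_label hT hr'
  rw [← hsub] at hT'
  exact ⟨_, ⟨S, r, hTσ, rfl, by simp [hT']⟩, _, _, hT', hidx⟩

/-- In the tree-unfolding of a cut-free cycle-normal
    `CLKID^ω_a` proof of `Add2(x,y,z) ⊢ Add1(x,y,z)`, the rightmost path from
    any node labeled with an index sequent is infinite. -/
theorem rightmost_path_infinite (P : PreProof) (hP : IsCNProofOfGoal P)
    (T : Lbl) (hT : IsUnfolding P T)
    (σ : List ℕ) (hσ : IndexSequentAt T σ) :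
    ∃ p : ℕ → List ℕ, p 0 = σ ∧ ∀ i, RightStep T (p i) (p (i + 1)) :=
  exists_seq_of_forall_exists (fun _ => P.exists_rightStep hP hT) hσ

end CLKID
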